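/- Let q be a prime power, let n ≥ 2 be an integer, and fix a generator U_0 of the hyperbolic polar space D_n of rank n over F_q. Then the set Y of all generators W with dim(W ∩ U_0) ≡ n (mod 2) is an (n−1)-Steiner system; that is, every (n−1)-dimensional totally isotropic subspace of V is contained in exactly one generator W satisfying dim(W ∩ U_0) ≡ n (mod 2). -/

import Mathlib

/-!
Let `B` be the polar form of `Q`. If `T` is totally isotropic of dimension `n - 1`, then `Tᗮ` has
dimension `n + 1` and `Tᗮ / T` is a hyperbolic plane, so exactly two generators contain `T`:
`T + ⟨v⟩` and `T + ⟨w⟩` for singular `v, w ∈ Tᗮ` with `B v w = 1`. As `U₀ᗮ = U₀`, one computes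
`dim (Tᗮ ∩ U₀) = dim (T ∩ U₀) + 1`, so `v` may be chosen in `U₀`. Then `T + ⟨v⟩` meets `U₀` in
dimension `dim (T ∩ U₀) + 1`, while `T + ⟨w⟩` meets it in `T ∩ U₀` only, because `U₀ ⊆ vᗮ` and
`w ∉ vᗮ`. Exactly one of these two dimensions is congruent to `n` modulo 2.
-/

/-- The hyperbolic quadratic form `Q(x) = ∑_{i=1}^n x_i x_{n+i}` on `(F_q)^{2n}`. -/
def hypQ (F : Type*) [Field F] (n : ℕ) (x : Fin (2 * n) → F) : F :=
  ∑ i : Fin n, x ⟨i.1, by have := i.2; omega⟩ * x ⟨n + i.1, by have := i.2; omega⟩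

/-- A subspace is totally isotropic for the hyperbolic quadratic form. -/
def HypIsotropic (F : Type*) [Field F] (n : ℕ)
    (U : Submodule F (Fin (2 * n) → F)) : Prop :=
  ∀ u ∈ U, hypQ F n u = 0

open Module Submodule LinearMap.BilinForm

theorem existsUnique_of_forall_eq_or_eq_of_xor {α : Type*} {P : α → Prop} {a b : α}
    (h : ∀ x, P x → x = a ∨ x = b) (hab : Xor (P a) (P b)) : ∃! x, P x := by
  rcases hab with ⟨ha, hb⟩ | ⟨hb, ha⟩
  · exact ⟨a, ha, fun x hx => (h x hx).resolve_right fun e => hb (e ▸ hx)⟩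
  · exact ⟨b, hb, fun x hx => (h x hx).resolve_left fun e => ha (e ▸ hx)⟩

theorem LinearMap.BilinForm.orthogonal_sup {K V : Type*} [Field K] [AddCommGroup V]
    [Module K V] (B : LinearMap.BilinForm K V) (X Y : Submodule K V) :
    B.orthogonal (X ⊔ Y) = B.orthogonal X ⊓ B.orthogonal Y := by
  refine le_antisymm (le_inf (orthogonal_le le_sup_left) (orthogonal_le le_sup_right)) ?_
  rintro z ⟨hzX, hzY⟩ x hx
  obtain ⟨a, ha, b, hb, rfl⟩ := mem_sup.mp hx
  rw [map_add, LinearMap.add_apply, hzX a ha, hzY b hb, add_zero]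

namespace QuadraticMap

variable {K V : Type*} [Field K] [AddCommGroup V] [Module K V]

def IsTotallyIsotropic (Q : QuadraticForm K V) (U : Submodule K V) : Prop :=
  ∀ u ∈ U, Q u = 0

variable {Q : QuadraticForm K V}

theorem polarBilin_isRefl (Q : QuadraticForm K V) : Q.polarBilin.IsRefl := fun x y h => by
  rwa [polarBilin_apply_apply, polar_comm, ← polarBilin_apply_apply]

namespace IsTotallyIsotropic

theorem polar_eq_zero {U : Submodule K V} (hU : IsTotallyIsotropic Q U) {x y : V}
    (hx : x ∈ U) (hy : y ∈ U) : polar Q x y = 0 := by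
  rw [polar, hU _ (U.add_mem hx hy), hU x hx, hU y hy, sub_zero, sub_zero]

theorem le_orthogonal {U : Submodule K V} (hU : IsTotallyIsotropic Q U) :
    U ≤ orthogonal Q.polarBilin U := fun _ hy => mem_orthogonal_iff.mpr fun _ hx =>
  hU.polar_eq_zero hx hy

theorem sup_span_singleton {T : Submodule K V} (hT : IsTotallyIsotropic Q T) {v : V}
    (hv : v ∈ orthogonal Q.polarBilin T) (hQv : Q v = 0) :
    IsTotallyIsotropic Q (T ⊔ K ∙ v) := by
  intro x hx
  obtain ⟨t, ht, y, hy, rfl⟩ := mem_sup.mp hx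
  obtain ⟨c, rfl⟩ := mem_span_singleton.mp hy
  rw [QuadraticMap.map_add (⇑Q), QuadraticMap.map_smul, polar_smul_right, hT t ht, hQv,
    ← polarBilin_apply_apply, mem_orthogonal_iff.mp hv t ht]
  simp

end IsTotallyIsotropic

theorem mem_of_mem_sup_span_singleton {T : Submodule K V} {v y x : V}
    (hv : v ∈ orthogonal Q.polarBilin T) (hvy : polar Q v y ≠ 0) (hx : x ∈ T ⊔ K ∙ y)
    (hvx : polar Q v x = 0) : x ∈ T := by
  obtain ⟨t, ht, z, hz, rfl⟩ := mem_sup.mp hx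
  obtain ⟨c, rfl⟩ := mem_span_singleton.mp hz
  rw [polar_add_right, polar_smul_right, polar_comm, ← polarBilin_apply_apply,
    mem_orthogonal_iff.mp hv t ht, zero_add, smul_eq_mul, mul_eq_zero] at hvx
  obtain rfl := hvx.resolve_right hvy
  simpa using ht

theorem IsTotallyIsotropic.sup_span_singleton_inf_eq {T U : Submodule K V} {v w : V}
    (hU : IsTotallyIsotropic Q U) (hvU : v ∈ U) (hv : v ∈ orthogonal Q.polarBilin T)
    (hvw : polar Q v w ≠ 0) : (T ⊔ K ∙ w) ⊓ U = T ⊓ U :=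
  le_antisymm (fun _ hx => ⟨mem_of_mem_sup_span_singleton hv hvw hx.1
    (hU.polar_eq_zero hvU hx.2), hx.2⟩) (inf_le_inf_right _ le_sup_left)

theorem map_add_smul_add_smul {T : Submodule K V} {v w t : V} (hT : IsTotallyIsotropic Q T)
    (hv : v ∈ orthogonal Q.polarBilin T) (hw : w ∈ orthogonal Q.polarBilin T)
    (hQv : Q v = 0) (hQw : Q w = 0) (hvw : polar Q v w = 1) (ht : t ∈ T) (c d : K) :
    Q (t + c • v + d • w) = c * d := by
  have htv : t + c • v ∈ T ⊔ K ∙ v := add_mem (mem_sup_left ht)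
    (mem_sup_right (smul_mem _ _ (mem_span_singleton_self v)))
  rw [QuadraticMap.map_add (⇑Q), hT.sup_span_singleton hv hQv _ htv, QuadraticMap.map_smul, hQw,
    polar_add_left, polar_smul_left, polar_smul_right, polar_smul_right, hvw,
    ← polarBilin_apply_apply, mem_orthogonal_iff.mp hw t ht]
  simp

variable [FiniteDimensional K V]

theorem finrank_sup_span_singleton {X : Submodule K V} {x : V} (hx : x ∉ X) :
    finrank K ↥(X ⊔ K ∙ x) = finrank K X + 1 := by
  have h := finrank_sup_add_finrank_inf_eq X (K ∙ x)
  rwa [(disjoint_span_singleton_of_notMem hx).eq_bot, finrank_bot, add_zero,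
    finrank_span_singleton (ne_of_mem_of_not_mem X.zero_mem hx).symm] at h

theorem finrank_sup_span_singleton_le (X : Submodule K V) (x : V) :
    finrank K ↥(X ⊔ K ∙ x) ≤ finrank K X + 1 := by
  have h := finrank_add_le_finrank_add_finrank X (K ∙ x)
  have hx : finrank K (K ∙ x) ≤ 1 := by simpa using finrank_span_le_card ({x} : Set V)
  omega

theorem sup_span_singleton_eq {T W : Submodule K V} {x : V} (hTW : T ≤ W) (hx : x ∈ W)
    (hxT : x ∉ T) (hW : finrank K W ≤ finrank K T + 1) : T ⊔ K ∙ x = W :=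
  eq_of_le_of_finrank_le (sup_le hTW ((span_singleton_le_iff_mem x W).mpr hx))
    (by rwa [finrank_sup_span_singleton hxT])

theorem finrank_sup_span_singleton_inf {T U : Submodule K V} {v : V} (hvU : v ∈ U)
    (hvT : v ∉ T) : finrank K ↥((T ⊔ K ∙ v) ⊓ U) = finrank K ↥(T ⊓ U) + 1 := by
  rw [sup_comm, sup_inf_assoc_of_le _ ((span_singleton_le_iff_mem v U).mpr hvU), sup_comm,
    finrank_sup_span_singleton fun h => hvT (mem_inf.mp h).1]

theorem exists_isotropic_polar_eq_one (hQ : Q.polarBilin.Nondegenerate) {T : Submodule K V}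
    {v : V} (hv : v ∈ orthogonal Q.polarBilin T) (hvT : v ∉ T) (hQv : Q v = 0) :
    ∃ w ∈ orthogonal Q.polarBilin T, Q w = 0 ∧ polar Q v w = 1 := by
  obtain ⟨u, hu, hvu⟩ : ∃ u ∈ orthogonal Q.polarBilin T, polar Q v u = 1 := by
    obtain ⟨u, hu, hvu⟩ : ∃ u ∈ orthogonal Q.polarBilin T, polar Q v u ≠ 0 := by
      contrapose! hvT
      rw [← orthogonal_orthogonal hQ (polarBilin_isRefl Q) T]
      exact fun u hu => (polar_comm Q u v).trans (hvT u hu)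
    refine ⟨(polar Q v u)⁻¹ • u, smul_mem _ _ hu, ?_⟩
    rw [polar_smul_right, smul_eq_mul, inv_mul_cancel₀ hvu]
  refine ⟨u - Q u • v, sub_mem hu (smul_mem _ _ hv), ?_, ?_⟩
  · rw [sub_eq_add_neg, QuadraticMap.map_add (⇑Q), QuadraticMap.map_neg, QuadraticMap.map_smul,
      hQv, polar_neg_right, polar_smul_right, polar_comm, hvu]
    simp
  · rw [polar_sub_right, polar_smul_right, polar_self, hQv, hvu]
    simp

theorem IsTotallyIsotropic.orthogonal_eq_self (hQ : Q.polarBilin.Nondegenerate)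
    {U : Submodule K V} (hU : IsTotallyIsotropic Q U) (h : 2 * finrank K U = finrank K V) :
    orthogonal Q.polarBilin U = U :=
  (eq_of_le_of_finrank_le hU.le_orthogonal (by rw [finrank_orthogonal hQ]; omega)).symm

theorem finrank_orthogonal_inf_add (hQ : Q.polarBilin.Nondegenerate) {U : Submodule K V}
    (hU : orthogonal Q.polarBilin U = U) (T : Submodule K V) :
    finrank K ↥(orthogonal Q.polarBilin T ⊓ U) + finrank K T =
      finrank K ↥(T ⊓ U) + finrank K U := by
  have hsup : orthogonal Q.polarBilin (orthogonal Q.polarBilin T ⊔ U) = T ⊓ U := by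
    rw [orthogonal_sup, hU, orthogonal_orthogonal hQ (polarBilin_isRefl Q)]
  have h₁ := finrank_orthogonal hQ (orthogonal Q.polarBilin T ⊔ U)
  have h₂ := finrank_orthogonal hQ T
  have h₃ := finrank_sup_add_finrank_inf_eq (orthogonal Q.polarBilin T) U
  have h₄ := Submodule.finrank_le (orthogonal Q.polarBilin T ⊔ U)
  have h₅ := Submodule.finrank_le T
  rw [hsup] at h₁
  omega

theorem orthogonal_eq_sup_sup {T : Submodule K V} {v w : V} (hT : IsTotallyIsotropic Q T)
    (hv : v ∈ orthogonal Q.polarBilin T) (hw : w ∈ orthogonal Q.polarBilin T)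
    (hQv : Q v = 0) (hvw : polar Q v w = 1)
    (hTdim : finrank K (orthogonal Q.polarBilin T) = finrank K T + 2) :
    orthogonal Q.polarBilin T = T ⊔ K ∙ v ⊔ K ∙ w := by
  have hvT : v ∉ T := fun h => by simpa [hvw] using mem_orthogonal_iff.mp hw v h
  have hwTv : w ∉ T ⊔ K ∙ v := fun h => by
    simpa [hvw] using (hT.sup_span_singleton hv hQv).polar_eq_zero
      (mem_sup_right (mem_span_singleton_self v)) h
  refine (eq_of_le_of_finrank_le ?_ ?_).symm
  · exact sup_le (sup_le hT.le_orthogonal ((span_singleton_le_iff_mem _ _).mpr hv))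
      ((span_singleton_le_iff_mem _ _).mpr hw)
  · rw [finrank_sup_span_singleton hwTv, finrank_sup_span_singleton hvT, hTdim]

theorem eq_or_eq_of_isTotallyIsotropic {T W : Submodule K V} {v w : V}
    (hT : IsTotallyIsotropic Q T) (hv : v ∈ orthogonal Q.polarBilin T)
    (hw : w ∈ orthogonal Q.polarBilin T) (hQv : Q v = 0) (hQw : Q w = 0)
    (hvw : polar Q v w = 1) (hTdim : finrank K (orthogonal Q.polarBilin T) = finrank K T + 2)
    (hW : IsTotallyIsotropic Q W) (hTW : T ≤ W) (hWdim : finrank K W = finrank K T + 1) :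
    W = T ⊔ K ∙ v ∨ W = T ⊔ K ∙ w := by
  obtain ⟨x, hxW, hxT⟩ := SetLike.not_le_iff_exists.mp fun h : W ≤ T => by
    have := Submodule.finrank_mono h; omega
  have hxorth : x ∈ T ⊔ K ∙ v ⊔ K ∙ w := by
    rw [← orthogonal_eq_sup_sup hT hv hw hQv hvw hTdim]
    have hWT : orthogonal Q.polarBilin W ≤ orthogonal Q.polarBilin T := orthogonal_le hTW
    exact hWT (hW.le_orthogonal hxW)
  obtain ⟨y, hy, z, hz, rfl⟩ := mem_sup.mp hxorth
  obtain ⟨t, ht, z', hz', rfl⟩ := mem_sup.mp hy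
  obtain ⟨c, rfl⟩ := mem_span_singleton.mp hz'
  obtain ⟨d, rfl⟩ := mem_span_singleton.mp hz
  have hcd : c * d = 0 := by
    rw [← map_add_smul_add_smul hT hv hw hQv hQw hvw ht, hW _ hxW]
  rcases mul_eq_zero.mp hcd with rfl | rfl
  · right
    have hx : t + (0 : K) • v + d • w ∈ T ⊔ K ∙ w := by
      rw [zero_smul, add_zero]
      exact add_mem (mem_sup_left ht) (mem_sup_right (smul_mem _ _ (mem_span_singleton_self w)))
    rw [← sup_span_singleton_eq hTW hxW hxT hWdim.le,
      sup_span_singleton_eq le_sup_left hx hxT (finrank_sup_span_singleton_le T w)]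
  · left
    have hx : t + c • v + (0 : K) • w ∈ T ⊔ K ∙ v := by
      rw [zero_smul, add_zero]
      exact add_mem (mem_sup_left ht) (mem_sup_right (smul_mem _ _ (mem_span_singleton_self v)))
    rw [← sup_span_singleton_eq hTW hxW hxT hWdim.le,
      sup_span_singleton_eq le_sup_left hx hxT (finrank_sup_span_singleton_le T v)]

theorem existsUnique_isotropic_finrank_parity (hQ : Q.polarBilin.Nondegenerate) {n : ℕ}
    (hV : finrank K V = 2 * n) {U₀ T : Submodule K V}
    (hU₀ : IsTotallyIsotropic Q U₀) (hU₀dim : finrank K U₀ = n)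
    (hT : IsTotallyIsotropic Q T) (hTdim : finrank K T + 1 = n) :
    ∃! W : Submodule K V, (IsTotallyIsotropic Q W ∧ finrank K W = n ∧
      finrank K ↥(W ⊓ U₀) % 2 = n % 2) ∧ T ≤ W := by
  have hTorth : finrank K (orthogonal Q.polarBilin T) = finrank K T + 2 := by
    have := finrank_orthogonal hQ T; omega
  have hU₀T := finrank_orthogonal_inf_add hQ (hU₀.orthogonal_eq_self hQ (by omega)) T
  obtain ⟨v, hv, hvT⟩ := SetLike.not_le_iff_exists.mp
    fun h : orthogonal Q.polarBilin T ⊓ U₀ ≤ T => by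
      have := finrank_mono (le_inf h inf_le_right); omega
  obtain ⟨hvorth, hvU₀⟩ := mem_inf.mp hv
  have hQv := hU₀ v hvU₀
  obtain ⟨w, hw, hQw, hvw⟩ := exists_isotropic_polar_eq_one hQ hvorth hvT hQv
  have hwT : w ∉ T := fun h => by
    simpa [polar_comm Q w v, hvw] using mem_orthogonal_iff.mp hvorth w h
  refine existsUnique_of_forall_eq_or_eq_of_xor (a := T ⊔ K ∙ v) (b := T ⊔ K ∙ w) ?_ ?_
  · rintro W ⟨⟨hW, hWdim, -⟩, hTW⟩
    exact eq_or_eq_of_isTotallyIsotropic hT hvorth hw hQv hQw hvw hTorth hW hTW (by omega)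
  · rw [hU₀.sup_span_singleton_inf_eq hvU₀ hvorth (by simp [hvw] : polar Q v w ≠ 0)]
    simp only [hT.sup_span_singleton hvorth hQv, hT.sup_span_singleton hw hQw,
      finrank_sup_span_singleton hvT, finrank_sup_span_singleton hwT,
      finrank_sup_span_singleton_inf hvU₀ hvT, hTdim, le_sup_left, true_and, and_true]
    unfold Xor
    omega

end QuadraticMap

namespace Hyperbolic

variable {F : Type*} [Field F] {n : ℕ}

def fstIdx (i : Fin n) : Fin (2 * n) := ⟨i, by omega⟩

def sndIdx (i : Fin n) : Fin (2 * n) := ⟨n + i, by omega⟩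

theorem fstIdx_injective : Function.Injective (fstIdx (n := n)) := fun i j h => by
  simpa [fstIdx, Fin.ext_iff] using h

theorem sndIdx_injective : Function.Injective (sndIdx (n := n)) := fun i j h => by
  simpa [sndIdx, Fin.ext_iff] using h

theorem fstIdx_ne_sndIdx (i j : Fin n) : fstIdx i ≠ sndIdx j := fun h => by
  simp only [fstIdx, sndIdx, Fin.ext_iff] at h
  omega

theorem exists_fstIdx_or_sndIdx (k : Fin (2 * n)) :
    (∃ i, k = fstIdx i) ∨ ∃ i, k = sndIdx i := by
  by_cases hk : k.1 < n
  · exact .inl ⟨⟨k, hk⟩, rfl⟩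
  · exact .inr ⟨⟨k - n, by omega⟩, Fin.ext (by simp only [sndIdx]; omega)⟩

variable (F n) in
def bilin : LinearMap.BilinForm F (Fin (2 * n) → F) :=
  ∑ i : Fin n, (LinearMap.mul F F).compl₁₂ (LinearMap.proj (fstIdx i)) (LinearMap.proj (sndIdx i))

theorem bilin_apply (x y : Fin (2 * n) → F) :
    bilin F n x y = ∑ i : Fin n, x (fstIdx i) * y (sndIdx i) := by
  simp [bilin]

variable (F n) in
def quadraticForm : QuadraticForm F (Fin (2 * n) → F) := (bilin F n).toQuadraticMap

theorem quadraticForm_apply (x : Fin (2 * n) → F) : quadraticForm F n x = hypQ F n x := by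
  rw [quadraticForm, LinearMap.BilinMap.toQuadraticMap_apply, bilin_apply]
  rfl

theorem hypIsotropic_iff {U : Submodule F (Fin (2 * n) → F)} :
    HypIsotropic F n U ↔ (quadraticForm F n).IsTotallyIsotropic U := by
  simp only [HypIsotropic, QuadraticMap.IsTotallyIsotropic, quadraticForm_apply]

theorem polar_single_sndIdx (x : Fin (2 * n) → F) (i : Fin n) :
    QuadraticMap.polar (quadraticForm F n) x (Pi.single (sndIdx i) 1) = x (fstIdx i) := by
  simp [quadraticForm, LinearMap.BilinMap.polar_toQuadraticMap, bilin_apply, Pi.single_apply,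
    sndIdx_injective.eq_iff, fstIdx_ne_sndIdx]

theorem polar_single_fstIdx (x : Fin (2 * n) → F) (i : Fin n) :
    QuadraticMap.polar (quadraticForm F n) x (Pi.single (fstIdx i) 1) = x (sndIdx i) := by
  simp [quadraticForm, LinearMap.BilinMap.polar_toQuadraticMap, bilin_apply, Pi.single_apply,
    fstIdx_injective.eq_iff, (fstIdx_ne_sndIdx _ _).symm]

theorem polarBilin_nondegenerate : (quadraticForm F n).polarBilin.Nondegenerate := by
  refine (QuadraticMap.polarBilin_isRefl _).nondegenerate_iff_separatingLeft.mpr fun x hx => ?_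
  funext k
  rcases exists_fstIdx_or_sndIdx k with ⟨i, rfl⟩ | ⟨i, rfl⟩
  · simpa [polar_single_sndIdx] using hx (Pi.single (sndIdx i) 1)
  · simpa [polar_single_fstIdx] using hx (Pi.single (fstIdx i) 1)

end Hyperbolic

theorem half_hyperbolic_is_steiner_general (n : ℕ) (hn : 2 ≤ n)
    (F : Type*) [Field F]
    (U₀ : Submodule F (Fin (2 * n) → F))
    (hU₀ : HypIsotropic F n U₀ ∧ Module.finrank F ↥U₀ = n)
    (T : Submodule F (Fin (2 * n) → F))
    (hT : HypIsotropic F n T) (hTrank : Module.finrank F ↥T = n - 1) :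
    ∃! W : Submodule F (Fin (2 * n) → F),
      (HypIsotropic F n W ∧ Module.finrank F ↥W = n ∧
        Module.finrank F ↥(W ⊓ U₀) % 2 = n % 2) ∧ T ≤ W := by
  simp only [Hyperbolic.hypIsotropic_iff] at hU₀ hT ⊢
  exact QuadraticMap.existsUnique_isotropic_finrank_parity Hyperbolic.polarBilin_nondegenerate
    (finrank_fin_fun F) hU₀.1 hU₀.2 hT (by omega)

theorem half_hyperbolic_is_steiner (q n : ℕ) (hq : IsPrimePow q) (hn : 2 ≤ n)
    (F : Type*) [Field F] [Fintype F] (hcard : Fintype.card F = q)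
    (U₀ : Submodule F (Fin (2 * n) → F))
    (hU₀ : HypIsotropic F n U₀ ∧ Module.finrank F ↥U₀ = n)
    (T : Submodule F (Fin (2 * n) → F))
    (hT : HypIsotropic F n T) (hTrank : Module.finrank F ↥T = n - 1) :
    ∃! W : Submodule F (Fin (2 * n) → F),
      (HypIsotropic F n W ∧ Module.finrank F ↥W = n ∧
        Module.finrank F ↥(W ⊓ U₀) % 2 = n % 2) ∧ T ≤ W :=
  half_hyperbolic_is_steiner_general n hn F U₀ hU₀ T hT hTrank
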